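/- Let q be a nondegenerate finite quadratic form on a finite abelian group L. If q is null-cobordant (i.e., there exists a q-isotropic subgroup K with |L| = |K|²), then Br(q) = 0 in Z/8. -/
import Mathlib

open scoped BigOperators

/-- The character `ℚ/2ℤ → ℂ`, `r ↦ exp(iπr)`. -/
noncomputable def e2 : AddCircle (2 : ℚ) → ℂ := fun x =>
  Quotient.liftOn' x (fun r : ℚ => Complex.exp (Real.pi * Complex.I * (r : ℂ))) (by
    intro a b hab
    obtain ⟨n, hn⟩ := QuotientAddGroup.leftRel_apply.mp hab
    have hn' : (n : ℚ) * 2 = -a + b := by simpa [zsmul_eq_mul] using hn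
    have hb : (b : ℚ) = a + 2 * n := by linarith
    simp only [hb]
    push_cast
    rw [mul_add, Complex.exp_add]
    have h1 : (Real.pi : ℂ) * Complex.I * (2 * (n : ℂ)) =
        (n : ℂ) * (2 * Real.pi * Complex.I) := by ring
    rw [h1, Complex.exp_int_mul_two_pi_mul_I, mul_one])

/-- The natural isomorphism `2 : ℚ/ℤ → ℚ/2ℤ`. -/
def dbl : AddCircle (1 : ℚ) → AddCircle (2 : ℚ) := fun x =>
  Quotient.liftOn' x (fun r : ℚ => ((2 * r : ℚ) : AddCircle (2 : ℚ))) (by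
    intro a b hab
    obtain ⟨n, hn⟩ := QuotientAddGroup.leftRel_apply.mp hab
    have hn' : (n : ℚ) * 1 = -a + b := by simpa [zsmul_eq_mul] using hn
    refine (QuotientAddGroup.eq).mpr ?_
    refine AddSubgroup.mem_zmultiples_iff.mpr ⟨n, ?_⟩
    rw [zsmul_eq_mul]
    linarith)

open Finset

lemma e2_coe (r : ℚ) : e2 ((r : ℚ) : AddCircle (2:ℚ)) = Complex.exp (Real.pi * Complex.I * r) := rfl

lemma dbl_coe (r : ℚ) : dbl ((r : ℚ) : AddCircle (1:ℚ)) = ((2*r : ℚ) : AddCircle (2:ℚ)) := rfl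

lemma e2_add (x y : AddCircle (2:ℚ)) : e2 (x + y) = e2 x * e2 y := by
  induction x using QuotientAddGroup.induction_on with | H r =>
  induction y using QuotientAddGroup.induction_on with | H s =>
  show e2 (((r+s : ℚ) : AddCircle (2:ℚ))) = _
  rw [e2_coe, e2_coe, e2_coe, ← Complex.exp_add]
  push_cast
  ring_nf

lemma e2_zero : e2 (0 : AddCircle (2:ℚ)) = 1 := by
  show e2 (((0:ℚ) : AddCircle (2:ℚ))) = 1
  rw [e2_coe]; simp

lemma e2_conj (x : AddCircle (2:ℚ)) : (starRingEnd ℂ) (e2 x) = e2 (-x) := by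
  induction x using QuotientAddGroup.induction_on with | H r =>
  show _ = e2 (((-r : ℚ) : AddCircle (2:ℚ)))
  rw [e2_coe, e2_coe, ← Complex.exp_conj]
  congr 1
  simp [mul_comm, mul_assoc]

lemma dbl_add (x y : AddCircle (1:ℚ)) : dbl (x + y) = dbl x + dbl y := by
  induction x using QuotientAddGroup.induction_on with | H r =>
  induction y using QuotientAddGroup.induction_on with | H s =>
  show dbl (((r+s : ℚ) : AddCircle (1:ℚ))) = _
  rw [dbl_coe, dbl_coe, dbl_coe]
  show _ = ((2*r + 2*s : ℚ) : AddCircle (2:ℚ))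
  norm_num [mul_add]

lemma dbl_zero : dbl (0 : AddCircle (1:ℚ)) = 0 := by
  show dbl (((0:ℚ) : AddCircle (1:ℚ))) = 0
  rw [dbl_coe]; norm_num

lemma e2_dbl_eq_one_iff (a : AddCircle (1:ℚ)) : e2 (dbl a) = 1 ↔ a = 0 := by
  induction a using QuotientAddGroup.induction_on with | H r =>
  rw [dbl_coe, e2_coe]
  constructor
  · intro h
    obtain ⟨n, hn⟩ := Complex.exp_eq_one_iff.mp h
    have hpiI : (Real.pi : ℂ) * Complex.I ≠ 0 :=
      mul_ne_zero (by simpa using Real.pi_ne_zero) Complex.I_ne_zero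
    have h2 : (Real.pi : ℂ) * Complex.I * ((2*r : ℚ) : ℂ) =
        (Real.pi : ℂ) * Complex.I * (2*(n:ℂ)) := by
      rw [hn]; ring
    have h3 : ((2*r : ℚ) : ℂ) = 2*(n:ℂ) := mul_left_cancel₀ hpiI h2
    have h4 : (r : ℂ) = (n : ℂ) := by
      push_cast at h3; linear_combination h3 / 2
    have h5 : r = (n : ℚ) := by exact_mod_cast h4
    rw [AddCircle.coe_eq_zero_iff]
    exact ⟨n, by rw [h5]; simp⟩
  · rintro h
    obtain ⟨n, hn⟩ := (AddCircle.coe_eq_zero_iff _).mp h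
    have hr : r = (n : ℚ) := by
      simpa [zsmul_eq_mul] using hn.symm
    subst hr
    have : (Real.pi : ℂ) * Complex.I * ((2*(n:ℚ) : ℚ) : ℂ) = (n:ℂ) * (2 * Real.pi * Complex.I) := by
      push_cast; ring
    rw [this, Complex.exp_int_mul_two_pi_mul_I]

lemma dbl_eq_zero {a : AddCircle (1:ℚ)} (h : dbl a = 0) : a = 0 := by
  rw [← e2_dbl_eq_one_iff, h, e2_zero]

lemma e2_dbl_zero' {a : AddCircle (1:ℚ)} (h : a = 0) : e2 (dbl a) = 1 :=
  (e2_dbl_eq_one_iff a).mpr h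

section

variable {G : Type*} [AddCommGroup G]

lemma char_sum_aux (s : Finset G) (f : G → ℂ) (g : G)
    (hmem : ∀ x ∈ s, g + x ∈ s) (hmem' : ∀ x ∈ s, -g + x ∈ s)
    (hf : ∀ x ∈ s, f (g + x) = f g * f x)
    (hg1 : f g ≠ 1) : ∑ x ∈ s, f x = 0 := by
  have key : ∑ x ∈ s, f (g + x) = ∑ x ∈ s, f x := by
    refine Finset.sum_equiv (Equiv.addLeft g) (fun i => ?_) (fun i hi => rfl)
    constructor
    · intro hi; exact hmem i hi
    · intro hi
      have := hmem' _ hi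
      simpa using this
  rw [Finset.sum_congr rfl hf, ← Finset.mul_sum] at key
  have : (f g - 1) * ∑ x ∈ s, f x = 0 := by rw [sub_mul, key]; ring
  rcases mul_eq_zero.mp this with h | h
  · exact absurd (sub_eq_zero.mp h) hg1
  · exact h

lemma gauss_sq (q : G → AddCircle (2:ℚ)) (b : G → G → AddCircle (1:ℚ))
    (hqadd : ∀ x y, q (x+y) = q x + q y + dbl (b x y))
    (s : Finset G)
    (hadd : ∀ x ∈ s, ∀ y ∈ s, x + y ∈ s) (hneg : ∀ x ∈ s, -x ∈ s) :
    (∑ x ∈ s, e2 (q x)) * (starRingEnd ℂ) (∑ x ∈ s, e2 (q x))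
      = ∑ z ∈ s, e2 (q z) * ∑ y ∈ s, e2 (dbl (b y z)) := by
  rw [map_sum, Finset.sum_mul_sum, Finset.sum_comm]
  have step : ∀ y ∈ s, ∑ x ∈ s, e2 (q x) * (starRingEnd ℂ) (e2 (q y))
      = ∑ z ∈ s, e2 (q z) * e2 (dbl (b y z)) := by
    intro y hy
    have reindex : ∑ x ∈ s, e2 (q x) * (starRingEnd ℂ) (e2 (q y))
        = ∑ z ∈ s, e2 (q (y + z)) * (starRingEnd ℂ) (e2 (q y)) := by
      refine (Finset.sum_equiv (Equiv.addLeft y) (fun i => ?_) (fun i hi => rfl)).symm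
      constructor
      · intro hi; exact hadd y hy i hi
      · intro hi; simpa using hadd _ (hneg y hy) _ hi
    rw [reindex]
    refine Finset.sum_congr rfl fun z hz => ?_
    rw [e2_conj, hqadd y z, e2_add, e2_add]
    have huv : e2 (q y) * e2 (-(q y)) = 1 := by
      rw [← e2_add, add_neg_cancel, e2_zero]
    calc e2 (q y) * e2 (q z) * e2 (dbl (b y z)) * e2 (-(q y))
        = (e2 (q z) * e2 (dbl (b y z))) * (e2 (q y) * e2 (-(q y))) := by ring
      _ = e2 (q z) * e2 (dbl (b y z)) := by rw [huv, mul_one]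
  rw [Finset.sum_congr rfl step, Finset.sum_comm]
  refine Finset.sum_congr rfl fun z hz => ?_
  rw [Finset.mul_sum]

end

/-- a nondegenerate finite quadratic form which is null-cobordant has
Brown invariant 0, i.e. its Gauss sum `Σ_x exp(iπ q(x))` equals `√|L|`
(`Br q = 0` precisely means the normalized Gauss sum equals `exp(iπ·0/4) = 1`). -/
theorem brown_of_null_cobordant {L : Type*} [AddCommGroup L] [Fintype L]
    (q : L → AddCircle (2 : ℚ)) (b : L → L → AddCircle (1 : ℚ))
    (hbsymm : ∀ x y, b x y = b y x)
    (hbadd : ∀ x y z, b (x + y) z = b x z + b y z)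
    (hqadd : ∀ x y, q (x + y) = q x + q y + dbl (b x y))
    (hqsmul : ∀ (n : ℤ) (x : L), q (n • x) = (n ^ 2 : ℤ) • q x)
    (hnd : (∀ x, (∀ y, b x y = 0) → x = 0) ∧
      ∀ φ : L →+ AddCircle (1 : ℚ), ∃ x, ∀ y, φ y = b x y)
    (K : AddSubgroup L) (hK : ∀ x ∈ K, q x = 0)
    (hcard : Nat.card K ^ 2 = Nat.card L) :
    ∑ x : L, e2 (q x) = (Real.sqrt (Fintype.card L) : ℂ) := by
  classical
  obtain ⟨hnd1, _⟩ := hnd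
  -- basic bilinearity facts
  have b_zero_left : ∀ y, b 0 y = 0 := by
    intro y
    have h := hbadd 0 0 y
    rw [add_zero] at h
    exact (left_eq_add.mp h)
  have b_zero_right : ∀ y, b y 0 = 0 := fun y => by rw [hbsymm]; exact b_zero_left y
  have b_neg_left : ∀ x y, b (-x) y = -(b x y) := by
    intro x y
    have h := hbadd x (-x) y
    rw [add_neg_cancel, b_zero_left] at h
    exact (eq_neg_of_add_eq_zero_right h.symm)
  have q_zero : q 0 = 0 := by
    have h := hqsmul 0 0
    simpa using h
  -- the "perp" predicate and finsets
  set Pp : L → Prop := fun x => ∀ k ∈ K, b x k = 0 with hPp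
  set PF : Finset L := Finset.univ.filter Pp with hPF
  set KF : Finset L := Finset.univ.filter (· ∈ K) with hKF
  set Rp : L → Prop := fun x => ∀ y ∈ PF, b x y = 0 with hRp
  set RF : Finset L := PF.filter Rp with hRF
  have mem_PF : ∀ {x}, x ∈ PF ↔ Pp x := by
    intro x; simp [hPF]
  have mem_KF : ∀ {x}, x ∈ KF ↔ x ∈ K := by
    intro x; simp [hKF]
  have mem_RF : ∀ {x}, x ∈ RF ↔ (Pp x ∧ Rp x) := by
    intro x; simp [hRF, mem_PF]
  -- K ⊆ P
  have dblb_K : ∀ k ∈ K, ∀ k' ∈ K, dbl (b k k') = 0 := by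
    intro k hk k' hk'
    have h := hqadd k k'
    rw [hK k hk, hK k' hk', hK _ (K.add_mem hk hk'), zero_add, zero_add] at h
    exact h.symm
  have K_Pp : ∀ k ∈ K, Pp k := by
    intro k hk k' hk'
    exact dbl_eq_zero (dblb_K k hk k' hk')
  have K_sub_PF : KF ⊆ PF := by
    intro x hx; exact mem_PF.mpr (K_Pp x (mem_KF.mp hx))
  have K_sub_RF : KF ⊆ RF := by
    intro x hx
    have hxK := mem_KF.mp hx
    refine mem_RF.mpr ⟨K_Pp x hxK, ?_⟩
    intro y hy
    rw [hbsymm]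
    exact (mem_PF.mp hy) x hxK
  -- closure properties
  have PF_add : ∀ x ∈ PF, ∀ y ∈ PF, x + y ∈ PF := by
    intro x hx y hy
    refine mem_PF.mpr (fun k hk => ?_)
    rw [hbadd, mem_PF.mp hx k hk, mem_PF.mp hy k hk, add_zero]
  have PF_neg : ∀ x ∈ PF, -x ∈ PF := by
    intro x hx
    refine mem_PF.mpr (fun k hk => ?_)
    rw [b_neg_left, mem_PF.mp hx k hk, neg_zero]
  have RF_add : ∀ x ∈ RF, ∀ y ∈ RF, x + y ∈ RF := by
    intro x hx y hy
    obtain ⟨hx1, hx2⟩ := mem_RF.mp hx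
    obtain ⟨hy1, hy2⟩ := mem_RF.mp hy
    refine mem_RF.mpr ⟨mem_PF.mp (PF_add x (mem_PF.mpr hx1) y (mem_PF.mpr hy1)), ?_⟩
    intro w hw
    rw [hbadd, hx2 w hw, hy2 w hw, add_zero]
  have RF_neg : ∀ x ∈ RF, -x ∈ RF := by
    intro x hx
    obtain ⟨hx1, hx2⟩ := mem_RF.mp hx
    refine mem_RF.mpr ⟨mem_PF.mp (PF_neg x (mem_PF.mpr hx1)), ?_⟩
    intro w hw
    rw [b_neg_left, hx2 w hw, neg_zero]
  -- notation
  set S : ℂ := ∑ x : L, e2 (q x) with hS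
  set T : ℂ := ∑ x ∈ PF, e2 (q x) with hT
  -- Step B : S * conj S = card L
  have stepB : S * (starRingEnd ℂ) S = (Fintype.card L : ℂ) := by
    have h := gauss_sq q b hqadd Finset.univ
      (fun x _ y _ => Finset.mem_univ _) (fun x _ => Finset.mem_univ _)
    rw [hS]
    rw [h]
    have inner : ∀ z : L, (∑ y : L, e2 (dbl (b y z)))
        = if z = 0 then (Fintype.card L : ℂ) else 0 := by
      intro z
      by_cases hz : z = 0
      · subst hz
        simp only [if_pos rfl]
        rw [Finset.sum_congr rfl (fun y _ => by rw [b_zero_right, dbl_zero, e2_zero])]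
        simp
      · rw [if_neg hz]
        have hex : ∃ g, b z g ≠ 0 := by
          by_contra hc
          push_neg at hc
          exact hz (hnd1 z hc)
        obtain ⟨g, hg⟩ := hex
        refine char_sum_aux Finset.univ (fun y => e2 (dbl (b y z))) g
          (fun x _ => Finset.mem_univ _) (fun x _ => Finset.mem_univ _) ?_ ?_
        · intro x _
          show e2 (dbl (b (g + x) z)) = e2 (dbl (b g z)) * e2 (dbl (b x z))
          rw [hbadd, dbl_add, e2_add]
        · show e2 (dbl (b g z)) ≠ 1
          rw [← hbsymm]
          intro hgone
          exact hg ((e2_dbl_eq_one_iff _).mp hgone)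
    rw [Finset.sum_congr rfl (fun z _ => by rw [inner z])]
    simp only [mul_ite, mul_zero]
    rw [Finset.sum_ite_eq' Finset.univ (0 : L) (fun z => e2 (q z) * (Fintype.card L : ℂ))]
    rw [if_pos (Finset.mem_univ _), q_zero, e2_zero, one_mul]
  -- Step C : S = T
  have KFcard_pos : 0 < KF.card := Finset.card_pos.mpr ⟨0, mem_KF.mpr K.zero_mem⟩
  have innerK : ∀ x : L, (∑ k ∈ KF, e2 (dbl (b x k)))
      = if Pp x then (KF.card : ℂ) else 0 := by
    intro x
    by_cases hx : Pp x
    · rw [if_pos hx]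
      rw [Finset.sum_congr rfl (fun k hk => by rw [hx k (mem_KF.mp hk), dbl_zero, e2_zero])]
      simp
    · rw [if_neg hx]
      have hex : ∃ g ∈ K, b x g ≠ 0 := by
        by_contra hc; push_neg at hc
        exact hx (fun k hk => hc k hk)
      obtain ⟨g, hgK, hg⟩ := hex
      refine char_sum_aux KF (fun k => e2 (dbl (b x k))) g ?_ ?_ ?_ ?_
      · intro y hy; exact mem_KF.mpr (K.add_mem hgK (mem_KF.mp hy))
      · intro y hy; exact mem_KF.mpr (K.add_mem (K.neg_mem hgK) (mem_KF.mp hy))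
      · intro y hy
        show e2 (dbl (b x (g + y))) = e2 (dbl (b x g)) * e2 (dbl (b x y))
        rw [hbsymm x (g+y), hbadd, dbl_add, e2_add, hbsymm g x, hbsymm y x]
      · show e2 (dbl (b x g)) ≠ 1
        intro h1; exact hg ((e2_dbl_eq_one_iff _).mp h1)
  have stepC : S = T := by
    have lhs1 : ∑ x : L, e2 (q x) * (∑ k ∈ KF, e2 (dbl (b x k))) = (KF.card : ℂ) * T := by
      rw [Finset.sum_congr rfl (fun x _ => by rw [innerK x])]
      simp only [mul_ite, mul_zero]
      rw [← Finset.sum_filter, hT, Finset.mul_sum]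
      exact Finset.sum_congr rfl (fun x _ => by ring)
    have lhs2 : ∑ x : L, e2 (q x) * (∑ k ∈ KF, e2 (dbl (b x k))) = (KF.card : ℂ) * S := by
      have per : ∀ x : L, e2 (q x) * (∑ k ∈ KF, e2 (dbl (b x k))) = ∑ k ∈ KF, e2 (q (x + k)) := by
        intro x
        rw [Finset.mul_sum]
        refine Finset.sum_congr rfl fun k hk => ?_
        rw [hqadd, hK k (mem_KF.mp hk), add_zero, e2_add]
      rw [Finset.sum_congr rfl (fun x _ => per x), Finset.sum_comm]
      have inn : ∀ k ∈ KF, ∑ x : L, e2 (q (x + k)) = S := by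
        intro k _
        rw [hS]
        exact Fintype.sum_equiv (Equiv.addRight k) _ _ (fun x => rfl)
      rw [Finset.sum_congr rfl inn, Finset.sum_const, nsmul_eq_mul]
    have hKne : (KF.card : ℂ) ≠ 0 := by exact_mod_cast KFcard_pos.ne'
    exact mul_left_cancel₀ hKne (lhs2.symm.trans lhs1)
  -- Step D
  have stepD : T * (starRingEnd ℂ) T = (PF.card : ℂ) * ∑ z ∈ RF, e2 (q z) := by
    have h := gauss_sq q b hqadd PF PF_add PF_neg
    rw [hT, h]
    have inner : ∀ z ∈ PF, (∑ y ∈ PF, e2 (dbl (b y z)))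
        = if Rp z then (PF.card : ℂ) else 0 := by
      intro z hz
      by_cases hRz : Rp z
      · rw [if_pos hRz]
        rw [Finset.sum_congr rfl (fun y hy => by
          rw [hbsymm, hRz y hy, dbl_zero, e2_zero])]
        simp
      · rw [if_neg hRz]
        have hex : ∃ g ∈ PF, b z g ≠ 0 := by
          by_contra hc; push_neg at hc; exact hRz (fun y hy => hc y hy)
        obtain ⟨g, hgP, hg⟩ := hex
        refine char_sum_aux PF (fun y => e2 (dbl (b y z))) g
          (fun y hy => PF_add g hgP y hy) (fun y hy => PF_add _ (PF_neg g hgP) y hy) ?_ ?_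
        · intro y hy
          show e2 (dbl (b (g + y) z)) = e2 (dbl (b g z)) * e2 (dbl (b y z))
          rw [hbadd, dbl_add, e2_add]
        · show e2 (dbl (b g z)) ≠ 1
          rw [← hbsymm]
          intro h1; exact hg ((e2_dbl_eq_one_iff _).mp h1)
    rw [Finset.sum_congr rfl (fun z hz => by rw [inner z hz])]
    simp only [mul_ite, mul_zero]
    rw [← Finset.sum_filter, Finset.mul_sum]
    exact Finset.sum_congr rfl (fun z _ => by ring)
  -- Step E
  have RF_sub_PF : RF ⊆ PF := Finset.filter_subset _ _
  have cardL_eq : (Fintype.card L : ℂ) = (PF.card : ℂ) * ∑ z ∈ RF, e2 (q z) := by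
    rw [← stepB, stepC, stepD]
  have hone : ∀ z ∈ RF, e2 (q z) = 1 := by
    by_contra hc
    push_neg at hc
    obtain ⟨g, hgR, hg⟩ := hc
    have hz : ∑ z ∈ RF, e2 (q z) = 0 := by
      refine char_sum_aux RF (fun z => e2 (q z)) g (RF_add g hgR)
        (fun x hx => RF_add _ (RF_neg g hgR) x hx) ?_ hg
      intro x hx
      show e2 (q (g + x)) = e2 (q g) * e2 (q x)
      have hb0 : b g x = 0 := (mem_RF.mp hgR).2 x (RF_sub_PF hx)
      rw [hqadd, hb0, dbl_zero, add_zero, e2_add]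
    rw [hz, mul_zero] at cardL_eq
    have h0 : (Fintype.card L : ℕ) = 0 := by exact_mod_cast cardL_eq
    have : (0:ℕ) < Fintype.card L := Fintype.card_pos_iff.mpr ⟨0⟩
    omega
  have usum : ∑ z ∈ RF, e2 (q z) = (RF.card : ℂ) := by
    rw [Finset.sum_congr rfl hone, Finset.sum_const, nsmul_eq_mul, mul_one]
  have cardEq : PF.card * RF.card = Fintype.card L := by
    have h1 : ((PF.card * RF.card : ℕ) : ℂ) = ((Fintype.card L : ℕ) : ℂ) := by
      push_cast
      rw [cardL_eq, usum]
    exact_mod_cast h1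
  -- Step F
  have hKcard : Nat.card ↥K = KF.card := by
    rw [Nat.card_eq_fintype_card, Fintype.card_subtype]
  have hcardL : KF.card ^ 2 = Fintype.card L := by
    rw [← hKcard, hcard, Nat.card_eq_fintype_card]
  have hKR : KF.card ≤ RF.card := Finset.card_le_card K_sub_RF
  have hPK : PF.card ≤ KF.card := by
    have h1 : PF.card * KF.card ≤ KF.card * KF.card := by
      calc PF.card * KF.card ≤ PF.card * RF.card := Nat.mul_le_mul_left _ hKR
        _ = Fintype.card L := cardEq
        _ = KF.card ^ 2 := hcardL.symm
        _ = KF.card * KF.card := sq KF.card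
    exact Nat.le_of_mul_le_mul_right h1 KFcard_pos
  have hPFKF : KF = PF := Finset.eq_of_subset_of_card_le K_sub_PF hPK
  -- Step G
  have hTval : T = (KF.card : ℂ) := by
    rw [hT, ← hPFKF]
    rw [Finset.sum_congr rfl (fun x hx => by rw [hK x (mem_KF.mp hx), e2_zero])]
    simp
  have hcast : ((Fintype.card L : ℝ)) = ((KF.card : ℝ)) ^ 2 := by
    rw [← hcardL]
    exact_mod_cast rfl
  have hs : Real.sqrt ((Fintype.card L : ℝ)) = (KF.card : ℝ) := by
    rw [hcast]
    exact Real.sqrt_sq (Nat.cast_nonneg _)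
  rw [stepC, hTval, hs, Complex.ofReal_natCast]
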